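/- arXiv:1901.07498 — 2 statements merged into one kernel-verified Lean document; each statement's English description precedes it below -/
import Mathlib

section
/- For Z a binomial random variable with parameters n and q, if the mean nq is at most k-1 (with k a positive integer), then P(Z ≤ k-1) ≥ 1/2. -/
/-!
Let `F(q) = P(Bin(n, q) ≤ m)`. As a polynomial in `q`, `F' = -n b_{n-1,m}` where `b_{n-1,m}` is a
Bernstein polynomial, so `F` decreases on `[0, 1]`.

If `n ≤ 2m + 1`, every atom `m + 1 + j` of the upper tail is paired with the atom `m - j`, and
`nq ≤ m` makes the lower one the heavier: the ratio of the two is a product of factors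
`(n - i) q / ((i + 1)(1 - q))` which pair off to at most `1` around `i = m`.

If `n ≥ 2m`, it suffices to take `q = c = m/n ≤ 1/2`. Around `c` the density `t^m (1 - t)^(n-1-m)`
of `-F'` is larger on the right than on the left, so `y ↦ F(c - y) + F(c + y)` decreases on
`[0, c]`, and `2 F(c) ≥ F(0) + F(2c) ≥ 1`.
-/

open Finset Polynomial Set

theorem add_le_two_mul_of_hasDerivAt_reflect {F f : ℝ → ℝ} {c : ℝ} (hc : 0 ≤ c)
    (hF : ∀ x, HasDerivAt F (f x) x) (hf : ∀ y ∈ Ioo 0 c, f (c + y) ≤ f (c - y)) :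
    F 0 + F (2 * c) ≤ 2 * F c := by
  have hψ : ∀ y, HasDerivAt (fun y => F (c - y) + F (c + y)) (f (c + y) - f (c - y)) y := by
    intro y
    have h₁ := (hF (c - y)).comp y ((hasDerivAt_id y).const_sub c)
    have h₂ := (hF (c + y)).comp y ((hasDerivAt_id y).const_add c)
    exact (h₁.add h₂).congr_deriv (by ring)
  have hanti := antitoneOn_of_hasDerivWithinAt_nonpos (convex_Icc 0 c)
    (continuous_iff_continuousAt.2 fun y => (hψ y).continuousAt).continuousOn
    (fun y _ => (hψ y).hasDerivWithinAt)
    (fun y hy => sub_nonpos.2 (hf y (by rwa [interior_Icc] at hy)))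
  have := hanti (left_mem_Icc.2 hc) (right_mem_Icc.2 hc) hc
  simp only [sub_zero, add_zero, sub_self, ← two_mul] at this
  linarith

/-- `a / t - b / (1 - t)` is the logarithmic derivative of `t ^ a * (1 - t) ^ b`. -/
theorem logDeriv_density_add_reflect_nonneg {a b c y : ℝ} (ha : 0 ≤ a)
    (hc : 2 * c ≤ 1) (hmode : b * c ≤ a * (1 - c)) (hy : 0 ≤ y) (hyc : y < c) :
    0 ≤ (a / (c + y) - b / (1 - (c + y))) + (a / (c - y) - b / (1 - (c - y))) := by
  have h₁ : 0 < c + y := by linarith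
  have h₂ : 0 < c - y := by linarith
  have h₃ : 0 < 1 - (c + y) := by linarith
  have h₄ : 0 < 1 - (c - y) := by linarith
  have key : b * (1 - c) * ((c + y) * (c - y)) ≤ a * c * ((1 - (c + y)) * (1 - (c - y))) := by
    nlinarith [mul_nonneg ha (mul_nonneg (sq_nonneg y) (by linarith : (0:ℝ) ≤ 1 - 2 * c)),
      mul_le_mul_of_nonneg_right hmode (mul_nonneg (by linarith : (0:ℝ) ≤ 1 - c)
        (mul_pos h₁ h₂).le)]
  field_simp
  nlinarith

theorem pow_mul_one_sub_pow_reflect_le {m B : ℕ} {c y : ℝ} (hc : 2 * c ≤ 1)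
    (hmode : B * c ≤ m * (1 - c)) (hy : 0 ≤ y) (hyc : y < c) :
    (c - y) ^ m * (1 - (c - y)) ^ B ≤ (c + y) ^ m * (1 - (c + y)) ^ B := by
  set L : ℝ → ℝ := fun t => m * Real.log t + B * Real.log (1 - t)
  have hL : ∀ t ∈ Ioo (0 : ℝ) 1, HasDerivAt L (m / t - B / (1 - t)) t := fun t ht => by
    have h₁ := ((hasDerivAt_id t).log ht.1.ne').const_mul (m : ℝ)
    have h₂ := (((hasDerivAt_id t).const_sub 1).log (sub_pos.2 ht.2).ne').const_mul (B : ℝ)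
    exact (h₁.add h₂).congr_deriv (by simp; ring)
  have hmem : ∀ z ∈ Ico 0 c, c + z ∈ Ioo (0 : ℝ) 1 ∧ c - z ∈ Ioo (0 : ℝ) 1 := fun z hz => by
    obtain ⟨hz₀, hzc⟩ := hz
    refine ⟨⟨?_, ?_⟩, ?_, ?_⟩ <;> linarith
  have hφ : ∀ z ∈ Ico 0 c, HasDerivAt (fun z => L (c + z) - L (c - z))
      ((m / (c + z) - B / (1 - (c + z))) + (m / (c - z) - B / (1 - (c - z)))) z := fun z hz =>
    (((hL _ (hmem z hz).1).comp z ((hasDerivAt_id z).const_add c)).sub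
      ((hL _ (hmem z hz).2).comp z ((hasDerivAt_id z).const_sub c))).congr_deriv (by simp; ring)
  have hmono := monotoneOn_of_hasDerivWithinAt_nonneg (convex_Ico 0 c)
    (fun z hz => (hφ z hz).continuousAt.continuousWithinAt)
    (fun z hz => (hφ z (interior_subset hz)).hasDerivWithinAt)
    (fun z hz => by
      rw [interior_Ico] at hz
      exact logDeriv_density_add_reflect_nonneg m.cast_nonneg hc hmode hz.1.le hz.2)
  have hc₀ : 0 < c := hy.trans_lt hyc
  have hLy := hmono ⟨le_rfl, hc₀⟩ ⟨hy, hyc⟩ hy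
  obtain ⟨⟨h₁, h₂⟩, h₃, h₄⟩ := hmem y ⟨hy, hyc⟩
  rw [← Real.log_le_log_iff (by positivity) (by positivity),
    Real.log_mul (by positivity) (by positivity), Real.log_mul (by positivity) (by positivity)]
  simp only [Real.log_pow, L, add_zero, sub_zero, sub_self, sub_nonneg] at hLy ⊢
  linarith

theorem sub_mul_add_mul_sq_le {m s t : ℕ} (hs : s ≤ m + 1) (ht : t ≤ s) :
    (s - t) * (s + t) * m ^ 2 ≤ s ^ 2 * ((m + 1 + t) * (m + 1 - t)) := by
  zify [ht, ht.trans hs]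
  nlinarith [mul_nonneg (by positivity : (0 : ℤ) ≤ 2 * m + 1)
      (by nlinarith : (0 : ℤ) ≤ (s : ℤ) ^ 2 - (t : ℤ) ^ 2),
    mul_nonneg (sq_nonneg (t : ℤ)) (by nlinarith : (0 : ℤ) ≤ ((m : ℤ) + 1) ^ 2 - (s : ℤ) ^ 2)]

/-- At `q = m / n` this is `P(Z = m + 1 + j) ≤ P(Z = m - j)` for `Z ~ Bin(n, q)`. -/
theorem choose_mul_pow_le_choose_mul_pow {n m j : ℕ} (hn : n ≤ 2 * m + 1) (hj : m + 1 + j ≤ n) :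
    n.choose (m + 1 + j) * m ^ (2 * j + 1) ≤ n.choose (m - j) * (n - m) ^ (2 * j + 1) := by
  induction j with
  | zero =>
    calc n.choose (m + 1) * m ^ 1 ≤ n.choose (m + 1) * (m + 1) :=
          by rw [pow_one]; exact Nat.mul_le_mul_left _ m.le_succ
      _ = n.choose m * (n - m) ^ 1 := by rw [Nat.choose_succ_right_eq, pow_one]
  | succ j ih =>
    have hup := Nat.choose_succ_right_eq n (m + 1 + j)
    have hdown := Nat.choose_succ_right_eq n (m - (j + 1))
    rw [show m - (j + 1) + 1 = m - j by omega] at hdown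
    rw [show n - (m + 1 + j) = n - m - (j + 1) by omega] at hup
    rw [show n - (m - (j + 1)) = n - m + (j + 1) by omega] at hdown
    have hpair := sub_mul_add_mul_sq_le (m := m) (s := n - m) (t := j + 1) (by omega) (by omega)
    rw [show m + 1 - (j + 1) = m - j by omega] at hpair
    have ih := ih (by omega)
    set s := n - m
    have key : n.choose (m + 1 + (j + 1)) * m ^ (2 * (j + 1) + 1) * ((m + 1 + (j + 1)) * (m - j))
        ≤ n.choose (m - (j + 1)) * s ^ (2 * (j + 1) + 1) * ((m + 1 + (j + 1)) * (m - j)) :=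
      calc _ = (n.choose (m + 1 + j + 1) * (m + 1 + j + 1)) * (m ^ (2 * j + 3) * (m - j)) := by
            ring_nf
        _ = (n.choose (m + 1 + j) * m ^ (2 * j + 1)) * ((s - (j + 1)) * m ^ 2 * (m - j)) := by
            rw [hup]; ring
        _ ≤ (n.choose (m - j) * s ^ (2 * j + 1)) * ((s - (j + 1)) * m ^ 2 * (m - j)) :=
            Nat.mul_le_mul_right _ ih
        _ = (n.choose (m - j) * (m - j)) * (s ^ (2 * j + 1) * ((s - (j + 1)) * m ^ 2)) := by
            ring
        _ = n.choose (m - (j + 1)) * s ^ (2 * j + 1) * ((s - (j + 1)) * (s + (j + 1)) * m ^ 2) := by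
            rw [hdown]; ring
        _ ≤ n.choose (m - (j + 1)) * s ^ (2 * j + 1) * (s ^ 2 * ((m + 1 + (j + 1)) * (m - j))) :=
            Nat.mul_le_mul_left _ hpair
        _ = _ := by ring
    exact Nat.le_of_mul_le_mul_right key (Nat.mul_pos (by omega) (by omega))

theorem bernsteinPolynomial_eval (n ν : ℕ) (q : ℝ) :
    (bernsteinPolynomial ℝ n ν).eval q = n.choose ν * q ^ ν * (1 - q) ^ (n - ν) := by
  simp [bernsteinPolynomial]

theorem bernsteinPolynomial_eval_nonneg (n ν : ℕ) {q : ℝ} (hq0 : 0 ≤ q) (hq1 : q ≤ 1) :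
    0 ≤ (bernsteinPolynomial ℝ n ν).eval q := by
  rw [bernsteinPolynomial_eval]
  have : 0 ≤ 1 - q := sub_nonneg.2 hq1
  positivity

/-- `(binomialCDF n k).eval q = P(Bin(n, q) < k)` (strict inequality). -/
noncomputable def binomialCDF (n k : ℕ) : ℝ[X] := ∑ i ∈ range k, bernsteinPolynomial ℝ n i

theorem binomialCDF_eval (n k : ℕ) (q : ℝ) :
    (binomialCDF n k).eval q = ∑ i ∈ range k, (n.choose i : ℝ) * q ^ i * (1 - q) ^ (n - i) := by
  simp only [binomialCDF, eval_finsetSum, bernsteinPolynomial_eval]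

theorem binomialCDF_eval_nonneg (n k : ℕ) {q : ℝ} (hq0 : 0 ≤ q) (hq1 : q ≤ 1) :
    0 ≤ (binomialCDF n k).eval q := by
  rw [binomialCDF, eval_finsetSum]
  exact sum_nonneg fun i _ => bernsteinPolynomial_eval_nonneg n i hq0 hq1

theorem binomialCDF_eval_zero (n m : ℕ) : (binomialCDF n (m + 1)).eval 0 = 1 := by
  simp [binomialCDF, eval_finsetSum, bernsteinPolynomial.eval_at_0]

theorem binomialCDF_of_lt {n k : ℕ} (h : n < k) : binomialCDF n k = 1 := by
  rw [binomialCDF, ← sum_range_add_sum_Ico _ (Nat.succ_le_of_lt h), bernsteinPolynomial.sum,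
    add_eq_left]
  exact sum_eq_zero fun i hi => bernsteinPolynomial.eq_zero_of_lt ℝ (by simp at hi; omega)

theorem derivative_binomialCDF (n m : ℕ) :
    derivative (binomialCDF n (m + 1)) = -(n * bernsteinPolynomial ℝ (n - 1) m) := by
  induction m with
  | zero => simp [binomialCDF, bernsteinPolynomial.derivative_zero]
  | succ m ih =>
    rw [binomialCDF, sum_range_succ, derivative_add, ← binomialCDF, ih,
      bernsteinPolynomial.derivative_succ]
    ring

theorem antitoneOn_binomialCDF_eval (n k : ℕ) :
    AntitoneOn (fun q => (binomialCDF n k).eval q) (Icc 0 1) := by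
  refine antitoneOn_of_deriv_nonpos (convex_Icc 0 1) (binomialCDF n k).continuousOn
    (binomialCDF n k).differentiable.differentiableOn fun q hq => ?_
  rw [interior_Icc] at hq
  rcases k with _ | m
  · simp [binomialCDF]
  rw [Polynomial.deriv, derivative_binomialCDF]
  simp only [eval_neg, eval_mul, eval_natCast, neg_nonpos]
  exact mul_nonneg n.cast_nonneg (bernsteinPolynomial_eval_nonneg _ _ hq.1.le hq.2.le)

theorem bernsteinPolynomial_eval_reflect_le {n m j : ℕ} {q : ℝ} (hn : n ≤ 2 * m + 1)
    (hq0 : 0 ≤ q) (hq1 : q ≤ 1) (hmean : n * q ≤ m) :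
    (bernsteinPolynomial ℝ n (m + 1 + j)).eval q ≤ (bernsteinPolynomial ℝ n (m - j)).eval q := by
  rcases lt_or_ge n (m + 1 + j) with hlt | hj
  · rw [bernsteinPolynomial.eq_zero_of_lt ℝ hlt, eval_zero]
    exact bernsteinPolynomial_eval_nonneg n _ hq0 hq1
  have hs : (0 : ℝ) < n - m := by
    rw [sub_pos]; exact_mod_cast (show m < n by omega)
  have hodds : (n.choose (m + 1 + j) : ℝ) * q ^ (2 * j + 1)
      ≤ n.choose (m - j) * (1 - q) ^ (2 * j + 1) := by
    have hnat : (n.choose (m + 1 + j) : ℝ) * m ^ (2 * j + 1)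
        ≤ n.choose (m - j) * ((n : ℝ) - m) ^ (2 * j + 1) := by
      rw [← Nat.cast_sub (by omega)]
      exact_mod_cast choose_mul_pow_le_choose_mul_pow hn hj
    refine le_of_mul_le_mul_right ?_ (pow_pos hs (2 * j + 1))
    calc (n.choose (m + 1 + j) : ℝ) * q ^ (2 * j + 1) * (n - m) ^ (2 * j + 1)
        = n.choose (m + 1 + j) * (q * (n - m)) ^ (2 * j + 1) := by rw [mul_pow]; ring
      _ ≤ n.choose (m + 1 + j) * ((1 - q) * m) ^ (2 * j + 1) := by
        gcongr ?_ * ?_ ^ _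
        linarith
      _ = (1 - q) ^ (2 * j + 1) * (n.choose (m + 1 + j) * m ^ (2 * j + 1)) := by
        rw [mul_pow]; ring
      _ ≤ (1 - q) ^ (2 * j + 1) * (n.choose (m - j) * (n - m) ^ (2 * j + 1)) := by gcongr
      _ = _ := by ring
  have hq : q ^ (m + 1 + j) = q ^ (m - j) * q ^ (2 * j + 1) := by
    rw [← pow_add]; congr 1; omega
  have hq' : (1 - q) ^ (n - (m - j)) = (1 - q) ^ (n - (m + 1 + j)) * (1 - q) ^ (2 * j + 1) := by
    rw [← pow_add]; congr 1; omega
  rw [bernsteinPolynomial_eval, bernsteinPolynomial_eval, hq, hq']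
  calc _ = (n.choose (m + 1 + j) * q ^ (2 * j + 1)) *
        (q ^ (m - j) * (1 - q) ^ (n - (m + 1 + j))) := by ring
    _ ≤ (n.choose (m - j) * (1 - q) ^ (2 * j + 1)) *
        (q ^ (m - j) * (1 - q) ^ (n - (m + 1 + j))) := by gcongr
    _ = _ := by ring

theorem half_le_binomialCDF_eval_of_le_two_mul_add_one {n m : ℕ} {q : ℝ} (hn : n ≤ 2 * m + 1)
    (hq0 : 0 ≤ q) (hq1 : q ≤ 1) (hmean : n * q ≤ m) :
    1 / 2 ≤ (binomialCDF n (m + 1)).eval q := by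
  have htotal := congrArg (eval q) (binomialCDF_of_lt (n := n) (k := (m + 1) + (m + 1)) (by omega))
  rw [binomialCDF, sum_range_add, eval_add, ← binomialCDF, eval_one] at htotal
  have htail : (∑ j ∈ range (m + 1), bernsteinPolynomial ℝ n (m + 1 + j)).eval q
      ≤ (binomialCDF n (m + 1)).eval q := by
    rw [binomialCDF, eval_finsetSum, eval_finsetSum]
    conv_rhs => rw [← sum_range_reflect]
    refine sum_le_sum fun j _ => ?_
    rw [Nat.add_sub_cancel]
    exact bernsteinPolynomial_eval_reflect_le hn hq0 hq1 hmean
  linarith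

theorem half_le_binomialCDF_eval_div_of_two_mul_le {n m : ℕ} (hn : 2 * m ≤ n) :
    1 / 2 ≤ (binomialCDF n (m + 1)).eval ((m : ℝ) / n) := by
  set c := (m : ℝ) / n
  have hc0 : 0 ≤ c := by positivity
  have hnc : (n : ℝ) * c = m := by
    rcases eq_or_ne n 0 with rfl | h
    · simp [show m = 0 by omega]
    · simp only [c]; field_simp
  have hc : 2 * c ≤ 1 := by
    rcases eq_or_ne n 0 with rfl | h
    · simp [c]
    · rw [← mul_div_assoc, div_le_one (by positivity)]; exact_mod_cast hn
  have hmode : ((n - 1 - m : ℕ) : ℝ) * c ≤ m * (1 - c) := by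
    have hB : ((n - 1 - m : ℕ) : ℝ) + m ≤ n := by exact_mod_cast (show n - 1 - m + m ≤ n by omega)
    nlinarith [mul_le_mul_of_nonneg_right hB hc0]
  have hF : ∀ x, HasDerivAt (fun x => (binomialCDF n (m + 1)).eval x)
      (-(n * (bernsteinPolynomial ℝ (n - 1) m).eval x)) x := fun x => by
    simpa [derivative_binomialCDF] using (binomialCDF n (m + 1)).hasDerivAt x
  have hreflect := add_le_two_mul_of_hasDerivAt_reflect hc0 hF fun y hy => by
    rw [neg_le_neg_iff, bernsteinPolynomial_eval, bernsteinPolynomial_eval,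
      mul_assoc _ ((c - y) ^ m), mul_assoc _ ((c + y) ^ m)]
    gcongr _ * (_ * ?_)
    exact pow_mul_one_sub_pow_reflect_le hc hmode hy.1.le hy.2
  rw [binomialCDF_eval_zero] at hreflect
  linarith [binomialCDF_eval_nonneg n (m + 1) (by positivity : 0 ≤ 2 * c) hc]

/-- For `Z ~ Bin(n, q)`, if the mean `n*q` is at most `k-1` (with `k ≥ 1`),
then `P(Z ≤ k-1) ≥ 1/2`.  Here `P(Z ≤ k-1) = ∑_{i=0}^{k-1} C(n,i) q^i (1-q)^{n-i}`. -/
theorem binomial_cdf_at_mean_ge_half (n k : ℕ) (q : ℝ)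
    (hk : 1 ≤ k) (hq0 : 0 ≤ q) (hq1 : q ≤ 1)
    (hmean : (n : ℝ) * q ≤ (k : ℝ) - 1) :
    (1 : ℝ) / 2 ≤ ∑ i ∈ Finset.range k, (n.choose i : ℝ) * q ^ i * (1 - q) ^ (n - i) := by
  obtain ⟨m, rfl⟩ : ∃ m, k = m + 1 := ⟨k - 1, by omega⟩
  rw [Nat.cast_succ, add_sub_cancel_right] at hmean
  rw [← binomialCDF_eval]
  rcases le_or_gt n (2 * m + 1) with hn | hn
  · exact half_le_binomialCDF_eval_of_le_two_mul_add_one hn hq0 hq1 hmean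
  have hn0 : (0 : ℝ) < n := Nat.cast_pos.2 (by omega)
  have hmn : (m : ℝ) / n ≤ 1 := (div_le_one hn0).2 (by exact_mod_cast (show m ≤ n by omega))
  calc (1 : ℝ) / 2 ≤ (binomialCDF n (m + 1)).eval ((m : ℝ) / n) :=
        half_le_binomialCDF_eval_div_of_two_mul_le (by omega)
    _ ≤ (binomialCDF n (m + 1)).eval q :=
        antitoneOn_binomialCDF_eval n (m + 1) ⟨hq0, hq1⟩ ⟨by positivity, hmn⟩
          ((le_div_iff₀ hn0).2 (by linarith))
end

section
/- For a fixed integer H ≥ 2 and a fixed constant c > 0, the function f(n) = n·((2c)^H·(k/n)^{H/(H-1)} - 1)/(2c·(k/n)^{1/(H-1)} - 1) is increasing in n for n ≥ k, provided 2c·(k/n)^{1/(H-1)} ≠ 1 and both numerator and denominator of the bracketed ratio are negative (i.e., 2c·(k/n)^{1/(H-1)} < 1 and (2c)^H·(k/n)^{H/(H-1)} < 1). -/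
open Real Finset

private lemma tree_aux (k H : ℕ) (c : ℝ) (hk : 1 ≤ k) (hH : 2 ≤ H) (hc : 0 < c)
    (n : ℝ) (hn : (k : ℝ) ≤ n)
    (hden : 2 * c * ((k : ℝ) / n) ^ ((1 : ℝ) / ((H : ℝ) - 1)) < 1) :
    n * ((2 * c) ^ (H : ℝ) * ((k : ℝ) / n) ^ ((H : ℝ) / ((H : ℝ) - 1)) - 1) /
      (2 * c * ((k : ℝ) / n) ^ ((1 : ℝ) / ((H : ℝ) - 1)) - 1)
      = ∑ j ∈ Finset.range H,
        (2 * c) ^ j * (k : ℝ) ^ ((j : ℝ) / ((H : ℝ) - 1)) * n ^ (1 - (j : ℝ) / ((H : ℝ) - 1)) := by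
  have hk0 : (0 : ℝ) < (k : ℝ) := by exact_mod_cast hk
  have hn0 : (0 : ℝ) < n := lt_of_lt_of_le hk0 hn
  have hkn : (0 : ℝ) ≤ (k : ℝ) / n := div_nonneg hk0.le hn0.le
  set e : ℝ := (H : ℝ) - 1 with he
  have he0 : (0 : ℝ) < e := by
    have : (2 : ℝ) ≤ (H : ℝ) := by exact_mod_cast hH
    linarith
  set x : ℝ := ((k : ℝ) / n) ^ ((1 : ℝ) / e) with hx
  have hx0 : 0 ≤ x := Real.rpow_nonneg hkn _
  set p : ℝ := 2 * c * x with hp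
  have hp1 : p < 1 := hden
  have hpne : p ≠ 1 := ne_of_lt hp1
  have hxpow : ∀ j : ℕ, x ^ j = ((k : ℝ) / n) ^ ((j : ℝ) / e) := by
    intro j
    rw [hx, ← Real.rpow_natCast (((k : ℝ) / n) ^ ((1 : ℝ) / e)) j, ← Real.rpow_mul hkn]
    ring_nf
  have hnum : (2 * c) ^ (H : ℝ) * ((k : ℝ) / n) ^ ((H : ℝ) / e) = p ^ H := by
    rw [hp, mul_pow, ← hxpow H, Real.rpow_natCast]
  rw [hnum, mul_div_assoc, ← geom_sum_eq hpne, Finset.mul_sum]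
  refine Finset.sum_congr rfl fun j _ => ?_
  rw [hp, mul_pow, hxpow j, Real.div_rpow hk0.le hn0.le,
    Real.rpow_sub hn0, Real.rpow_one]
  field_simp

/-- For fixed integers `k ≥ 1`, `H ≥ 2` and a constant `c > 0`, the function
`f(n) = n·((2c)^H·(k/n)^(H/(H-1)) - 1)/(2c·(k/n)^(1/(H-1)) - 1)` is increasing in `n` for
`n ≥ k`, provided that at each point `2c·(k/n)^(1/(H-1)) < 1` and `(2c)^H·(k/n)^(H/(H-1)) < 1`
(so numerator and denominator of the bracketed ratio are both negative). -/
theorem tree_transmissions_increasing (k H : ℕ) (c : ℝ)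
    (hk : 1 ≤ k) (hH : 2 ≤ H) (hc : 0 < c)
    (f : ℝ → ℝ)
    (hf : ∀ n : ℝ, f n = n * ((2 * c) ^ (H : ℝ) * ((k : ℝ) / n) ^ ((H : ℝ) / ((H : ℝ) - 1)) - 1) /
      (2 * c * ((k : ℝ) / n) ^ ((1 : ℝ) / ((H : ℝ) - 1)) - 1))
    (n₁ n₂ : ℝ) (hn₁ : (k : ℝ) ≤ n₁) (hlt : n₁ < n₂)
    (hden₁ : 2 * c * ((k : ℝ) / n₁) ^ ((1 : ℝ) / ((H : ℝ) - 1)) < 1)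
    (hnum₁ : (2 * c) ^ (H : ℝ) * ((k : ℝ) / n₁) ^ ((H : ℝ) / ((H : ℝ) - 1)) < 1)
    (hden₂ : 2 * c * ((k : ℝ) / n₂) ^ ((1 : ℝ) / ((H : ℝ) - 1)) < 1)
    (hnum₂ : (2 * c) ^ (H : ℝ) * ((k : ℝ) / n₂) ^ ((H : ℝ) / ((H : ℝ) - 1)) < 1) :
    f n₁ < f n₂ := by
  have hk0 : (0 : ℝ) < (k : ℝ) := by exact_mod_cast hk
  have hn₁0 : (0 : ℝ) < n₁ := lt_of_lt_of_le hk0 hn₁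
  have hn₂ : (k : ℝ) ≤ n₂ := le_of_lt (lt_of_le_of_lt hn₁ hlt)
  have he0 : (0 : ℝ) < (H : ℝ) - 1 := by
    have : (2 : ℝ) ≤ (H : ℝ) := by exact_mod_cast hH
    linarith
  rw [hf, hf, tree_aux k H c hk hH hc n₁ hn₁ hden₁, tree_aux k H c hk hH hc n₂ hn₂ hden₂]
  apply Finset.sum_lt_sum
  · intro j hj
    have hj' : (j : ℝ) ≤ (H : ℝ) - 1 := by
      have : j + 1 ≤ H := Finset.mem_range.mp hj
      have : ((j : ℝ) + 1) ≤ (H : ℝ) := by exact_mod_cast this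
      linarith
    have hexp : 0 ≤ 1 - (j : ℝ) / ((H : ℝ) - 1) := by
      have : (j : ℝ) / ((H : ℝ) - 1) ≤ 1 := by
        rw [div_le_one he0]; exact hj'
      linarith
    have h1 : n₁ ^ (1 - (j : ℝ) / ((H : ℝ) - 1)) ≤ n₂ ^ (1 - (j : ℝ) / ((H : ℝ) - 1)) :=
      Real.rpow_le_rpow hn₁0.le hlt.le hexp
    have h2 : 0 ≤ (2 * c) ^ j * (k : ℝ) ^ ((j : ℝ) / ((H : ℝ) - 1)) :=
      mul_nonneg (pow_nonneg (by linarith) _) (Real.rpow_nonneg hk0.le _)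
    exact mul_le_mul_of_nonneg_left h1 h2
  · refine ⟨0, Finset.mem_range.mpr (by omega), ?_⟩
    simp only [pow_zero, Nat.cast_zero, zero_div, Real.rpow_zero, sub_zero, Real.rpow_one,
      one_mul]
    exact hlt
end
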